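/- At a = (0,…,0,s) the Ricci curvature of g = h²δ in the unit normal direction to F_s equals ((n−1)/3)π² > 0, while at b = (1,…,1,s) it equals (1−n)π² < 0. Hence the Ricci curvature in the normal direction to the totally geodesic leaf F_s takes both signs on the same leaf. -/

import Mathlib

/-! For `g = h²δ` the Christoffel symbols are `Γᵏᵢⱼ = h⁻¹ (δⱼₖ ∂ᵢh + δₖᵢ ∂ⱼh − δᵢⱼ ∂ₖh)`, and
`h⁻² ⟨R(∂ᵢ, ∂_N)∂_N, ∂ᵢ⟩ = Rⁱ_NiN`. When `h` does not depend on `x_N` and `x` is a critical point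
of `h`, every `Γ` vanishes at `x`, and the only surviving term of `Rⁱ_NiN` is
`∂ᵢ Γⁱ_NN = ∂ᵢ(−∂ᵢh / h) = −∂ᵢ²h / h`. For `h = ∏ (2 + cos πxᵢ)` the points with integer
coordinates are critical, and there `−∂ᵢ²h / h = π² cos πxᵢ / (2 + cos πxᵢ)`, which is `π²/3`
where `xᵢ = 0` and `−π²` where `xᵢ = 1`. -/

open Real Finset

/-- Partial derivative of `f` in the `i`-th coordinate direction. -/
noncomputable def pd {n : ℕ} (i : Fin n) (f : (Fin n → ℝ) → ℝ) (x : Fin n → ℝ) : ℝ :=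
  fderiv ℝ f x (Pi.single i 1)

/-- The conformal factor `h(x) = ∏_{i=1}^{n-1} (2 + cos (π xᵢ))`. -/
noncomputable def hC (n : ℕ) (x : Fin n → ℝ) : ℝ :=
  ∏ i : Fin (n - 1), (2 + Real.cos (Real.pi * x (Fin.castLE (Nat.sub_le n 1) i)))

/-- The conformally flat metric `g_{ij} = h² δ_{ij}`. -/
noncomputable def gM {n : ℕ} (h : (Fin n → ℝ) → ℝ) (x : Fin n → ℝ) (i j : Fin n) : ℝ :=
  if i = j then (h x) ^ 2 else 0

/-- Christoffel symbols `Γᵏ_{ij} = ½ Σₗ g^{kl} (∂ᵢ g_{jl} + ∂ⱼ g_{li} − ∂ₗ g_{ij})`,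
with inverse metric `g^{kl} = h⁻² δ_{kl}`. -/
noncomputable def Γconf {n : ℕ} (h : (Fin n → ℝ) → ℝ) (k i j : Fin n) (x : Fin n → ℝ) : ℝ :=
  (1 / 2) * ∑ l, (if k = l then ((h x) ^ 2)⁻¹ else 0) *
    (pd i (fun y => gM h y j l) x + pd j (fun y => gM h y l i) x - pd l (fun y => gM h y i j) x)

/-- Components of the curvature tensor: `R(∂ᵢ,∂ⱼ)∂ₖ = (Rcurv h l k i j) ∂ₗ`. -/
noncomputable def Rcurv {n : ℕ} (h : (Fin n → ℝ) → ℝ) (l k i j : Fin n) (x : Fin n → ℝ) : ℝ :=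
  pd i (fun y => Γconf h l j k y) x - pd j (fun y => Γconf h l i k y) x
    + ∑ m, Γconf h m j k x * Γconf h l i m x - ∑ m, Γconf h m i k x * Γconf h l j m x

/-- Jacobi operator components `(R̄_{∂_N})_{ij} = ⟨R̄(∂ᵢ,∂_N)∂_N, ∂ⱼ⟩`. -/
noncomputable def Jac {n : ℕ} (h : (Fin n → ℝ) → ℝ) (N i j : Fin n) (x : Fin n → ℝ) : ℝ :=
  ∑ l, gM h x l j * Rcurv h l N i N x

open Function

section PartialDerivatives

variable {n : ℕ} {F : (Fin n → ℝ) → ℝ} {x : Fin n → ℝ} {i : Fin n}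

lemma pd_eq_deriv_update (hF : DifferentiableAt ℝ F x) :
    pd i F x = deriv (fun t => F (update x i t)) (x i) :=
  ((hF.hasFDerivAt.comp_hasDerivAt_of_eq (x i) (hasDerivAt_update x i (x i))
    (update_eq_self i x).symm).deriv).symm

lemma pd_eq_mul_deriv_of_update {ψ : ℝ → ℝ} {c : ℝ} (hF : DifferentiableAt ℝ F x)
    (hupd : ∀ t, F (update x i t) = c * ψ t) : pd i F x = c * deriv ψ (x i) := by
  rw [pd_eq_deriv_update hF, funext hupd, deriv_const_mul_field']

lemma pd_eq_zero_of_update (hF : DifferentiableAt ℝ F x)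
    (hupd : ∀ t, F (update x i t) = F x) : pd i F x = 0 := by
  rw [pd_eq_deriv_update hF, funext hupd, deriv_const]

lemma ContDiff.differentiable_pd (hF : ContDiff ℝ 2 F) (i : Fin n) :
    Differentiable ℝ (pd i F) := fun y =>
  ((hF.fderiv_right (m := 1) le_rfl).differentiable one_ne_zero y).clm_apply
    (differentiableAt_const _)

end PartialDerivatives

section ConformallyFlat

variable {n : ℕ} {h : (Fin n → ℝ) → ℝ} {x : Fin n → ℝ}

lemma pd_gM (hx : DifferentiableAt ℝ h x) (k i j : Fin n) :
    pd k (fun y => gM h y i j) x = if i = j then 2 * h x * pd k h x else 0 := by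
  by_cases hij : i = j
  · simp only [gM, hij, if_true, pd]
    rw [fderiv_fun_pow 2 hx]
    simp
  · simp [gM, hij, pd]

lemma Γconf_eq (hx : DifferentiableAt ℝ h x) (k i j : Fin n) :
    Γconf h k i j x = (h x)⁻¹ * ((if j = k then pd i h x else 0)
      + (if k = i then pd j h x else 0) - (if i = j then pd k h x else 0)) := by
  rw [Γconf, Finset.sum_eq_single k (fun l _ hl => by simp [Ne.symm hl]) (by simp)]
  simp only [if_true, pd_gM hx]
  rcases eq_or_ne (h x) 0 with h0 | h0
  · simp [h0]
  · field_simp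
    split_ifs <;> ring

lemma Γconf_eq_zero_of_pd_eq_zero (hx : DifferentiableAt ℝ h x) (hcrit : ∀ k, pd k h x = 0)
    (k i j : Fin n) : Γconf h k i j x = 0 := by
  simp [Γconf_eq hx, hcrit]

lemma Γconf_self_left (hx : DifferentiableAt ℝ h x) (i j : Fin n) :
    Γconf h i i j x = (h x)⁻¹ * pd j h x := by
  rw [Γconf_eq hx]
  split_ifs <;> simp_all

lemma Γconf_of_ne (hx : DifferentiableAt ℝ h x) {i j : Fin n} (hij : i ≠ j) :
    Γconf h i j j x = -((h x)⁻¹ * pd i h x) := by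
  simp [Γconf_eq hx, hij, Ne.symm hij]

lemma Rcurv_eq_neg_inv_mul_pd_pd (hh : ContDiff ℝ 2 h) {N i : Fin n} (hN : ∀ y, pd N h y = 0)
    (hcrit : ∀ k, pd k h x = 0) (hx0 : h x ≠ 0) (hi : i ≠ N) :
    Rcurv h i N i N x = -((h x)⁻¹ * pd i (pd i h) x) := by
  have hdiff := hh.differentiable two_ne_zero
  have hΓself : (fun y => Γconf h i i N y) = fun _ => 0 := by
    funext y
    rw [Γconf_self_left (hdiff y), hN, mul_zero]
  have hΓnormal : (fun y => Γconf h i N N y) = fun y => -((h y)⁻¹ * pd i h y) :=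
    funext fun y => Γconf_of_ne (hdiff y) hi
  have hprod : HasFDerivAt (fun y => (h y)⁻¹ * pd i h y)
      ((h x)⁻¹ • fderiv ℝ (pd i h) x + pd i h x • fderiv ℝ (fun y => (h y)⁻¹) x) x :=
    ((hdiff x).inv hx0).hasFDerivAt.mul ((hh.differentiable_pd i) x).hasFDerivAt
  have hpdΓnormal : pd i (fun y => -((h y)⁻¹ * pd i h y)) x = -((h x)⁻¹ * pd i (pd i h) x) := by
    rw [pd, fderiv_fun_neg, hprod.fderiv, neg_apply, add_apply, smul_apply, smul_apply,
      hcrit i, zero_smul, add_zero, smul_eq_mul, pd]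
  simp only [Rcurv, Γconf_eq_zero_of_pd_eq_zero (hdiff x) hcrit, zero_mul,
    Finset.sum_const_zero, hΓself, hΓnormal, hpdΓnormal]
  simp [pd]

lemma Jac_self (N i : Fin n) : Jac h N i i x = h x ^ 2 * Rcurv h i N i N x := by
  rw [Jac, Finset.sum_eq_single i (fun l _ hl => by simp [gM, hl]) (by simp)]
  simp [gM]

lemma inv_sq_mul_Jac_eq_neg_pd_pd_div (hh : ContDiff ℝ 2 h) {N i : Fin n} (hN : ∀ y, pd N h y = 0)
    (hcrit : ∀ k, pd k h x = 0) (hx0 : h x ≠ 0) (hi : i ≠ N) :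
    ((h x) ^ 2)⁻¹ * Jac h N i i x = -(pd i (pd i h) x / h x) := by
  rw [Jac_self, Rcurv_eq_neg_inv_mul_pd_pd hh hN hcrit hx0 hi]
  field_simp

end ConformallyFlat

section SeparableProduct

variable {n : ℕ} {ι : Type*} [Fintype ι] {e : ι → Fin n} {φ : ℝ → ℝ}

lemma pd_prod_comp_of_forall_ne (hφ : Differentiable ℝ φ) {k : Fin n} (hk : ∀ j, e j ≠ k)
    (y : Fin n → ℝ) : pd k (fun y => ∏ j, φ (y (e j))) y = 0 :=
  pd_eq_zero_of_update (by fun_prop) fun t => Finset.prod_congr rfl fun j _ => by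
    rw [update_of_ne (hk j)]

variable [DecidableEq ι]

lemma prod_erase_comp_update (he : Injective e) (y : Fin n → ℝ) (i : ι) (t : ℝ) :
    ∏ j ∈ univ.erase i, φ (update y (e i) t (e j)) = ∏ j ∈ univ.erase i, φ (y (e j)) :=
  Finset.prod_congr rfl fun j hj => by
    rw [update_of_ne (he.ne (Finset.ne_of_mem_erase hj))]

lemma prod_comp_update (he : Injective e) (y : Fin n → ℝ) (i : ι) (t : ℝ) :
    ∏ j, φ (update y (e i) t (e j)) = (∏ j ∈ univ.erase i, φ (y (e j))) * φ t := by
  rw [← Finset.prod_erase_mul univ _ (mem_univ i), prod_erase_comp_update he, update_self]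

lemma pd_prod_comp (hφ : Differentiable ℝ φ) (he : Injective e) (y : Fin n → ℝ) (i : ι) :
    pd (e i) (fun y => ∏ j, φ (y (e j))) y
      = (∏ j ∈ univ.erase i, φ (y (e j))) * deriv φ (y (e i)) :=
  pd_eq_mul_deriv_of_update (by fun_prop) (prod_comp_update he y i)

lemma pd_pd_prod_comp (hφ : ContDiff ℝ 2 φ) (he : Injective e) (x : Fin n → ℝ) (i : ι) :
    pd (e i) (pd (e i) fun y => ∏ j, φ (y (e j))) x
      = (∏ j ∈ univ.erase i, φ (x (e j))) * deriv (deriv φ) (x (e i)) := by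
  have hP : ContDiff ℝ 2 fun y : Fin n → ℝ => ∏ j, φ (y (e j)) := by fun_prop
  refine pd_eq_mul_deriv_of_update (hP.differentiable_pd _ x) fun t => ?_
  rw [pd_prod_comp (hφ.differentiable two_ne_zero) he, prod_erase_comp_update he, update_self]

end SeparableProduct

noncomputable def cosFactor (t : ℝ) : ℝ := 2 + cos (π * t)

lemma cosFactor_pos (t : ℝ) : 0 < cosFactor t := by
  unfold cosFactor; linarith [neg_one_le_cos (π * t)]

lemma contDiff_cosFactor : ContDiff ℝ 2 cosFactor := by
  unfold cosFactor; fun_prop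

lemma deriv_cosFactor (t : ℝ) : deriv cosFactor t = -(π * sin (π * t)) := by
  have hlin : DifferentiableAt ℝ (fun t : ℝ => π * t) t := by fun_prop
  unfold cosFactor
  simp only [deriv_const_add', deriv_cos hlin, deriv_const_mul_id', neg_mul, neg_inj]
  ring

lemma deriv_deriv_cosFactor (t : ℝ) : deriv (deriv cosFactor) t = -(π ^ 2 * cos (π * t)) := by
  have hlin : DifferentiableAt ℝ (fun t : ℝ => π * t) t := by fun_prop
  simp only [funext deriv_cosFactor, deriv.fun_neg', deriv_const_mul_field',
    deriv_sin hlin, deriv_const_mul_id', neg_inj]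
  ring

lemma hC_eq (n : ℕ) : hC n = fun y => ∏ j, cosFactor (y (Fin.castLE (Nat.sub_le n 1) j)) := rfl

lemma contDiff_hC (n : ℕ) : ContDiff ℝ 2 (hC n) :=
  contDiff_prod fun _ _ => contDiff_cosFactor.comp (contDiff_apply _ _ _)

lemma hC_pos (n : ℕ) (x : Fin n → ℝ) : 0 < hC n x :=
  Finset.prod_pos fun _ _ => cosFactor_pos _

section LastCoordinate

variable {n : ℕ} {N : Fin n}

lemma castLE_ne_of_val_eq (hN : (N : ℕ) = n - 1) (j : Fin (n - 1)) :
    Fin.castLE (Nat.sub_le n 1) j ≠ N := by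
  rw [ne_eq, Fin.ext_iff, Fin.val_castLE, hN]
  exact j.isLt.ne

lemma exists_castLE_eq_of_ne (hN : (N : ℕ) = n - 1) {i : Fin n} (hi : i ≠ N) :
    ∃ j : Fin (n - 1), Fin.castLE (Nat.sub_le n 1) j = i :=
  ⟨⟨i, by have := Fin.val_ne_of_ne hi; omega⟩, rfl⟩

lemma inv_sq_mul_Jac_hC (hN : (N : ℕ) = n - 1) {x : Fin n → ℝ}
    (hsin : ∀ j ≠ N, sin (π * x j) = 0) {i : Fin n} (hi : i ≠ N) :
    ((hC n x) ^ 2)⁻¹ * Jac (hC n) N i i x = π ^ 2 * cos (π * x i) / cosFactor (x i) := by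
  have he : Injective (Fin.castLE (Nat.sub_le n 1)) := Fin.castLE_injective _
  have hdiff : Differentiable ℝ cosFactor := contDiff_cosFactor.differentiable two_ne_zero
  have hpdN : ∀ y, pd N (hC n) y = 0 :=
    pd_prod_comp_of_forall_ne hdiff (castLE_ne_of_val_eq hN)
  have hcrit : ∀ k, pd k (hC n) x = 0 := by
    intro k
    by_cases hk : k = N
    · exact hk ▸ hpdN x
    · obtain ⟨j, rfl⟩ := exists_castLE_eq_of_ne hN hk
      rw [hC_eq, pd_prod_comp hdiff he, deriv_cosFactor, hsin _ hk, mul_zero, neg_zero, mul_zero]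
  obtain ⟨j, rfl⟩ := exists_castLE_eq_of_ne hN hi
  have hrest : ∏ k ∈ univ.erase j, cosFactor (x (Fin.castLE (Nat.sub_le n 1) k)) ≠ 0 :=
    (Finset.prod_pos fun _ _ => cosFactor_pos _).ne'
  rw [inv_sq_mul_Jac_eq_neg_pd_pd_div (contDiff_hC n) hpdN hcrit (hC_pos n x).ne' hi]
  simp only [hC_eq]
  rw [pd_pd_prod_comp contDiff_cosFactor he, deriv_deriv_cosFactor,
    ← Finset.prod_erase_mul _ _ (mem_univ j)]
  field_simp [(cosFactor_pos _).ne']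

lemma sum_inv_sq_mul_Jac_hC_of_const (hN : (N : ℕ) = n - 1) {x : Fin n → ℝ} {c : ℝ}
    (hx : ∀ j ≠ N, x j = c) (hc : sin (π * c) = 0) :
    ∑ i ∈ univ.erase N, ((hC n x) ^ 2)⁻¹ * Jac (hC n) N i i x
      = ((n : ℝ) - 1) * (π ^ 2 * cos (π * c) / cosFactor c) := by
  have hterm : ∀ i ∈ univ.erase N, ((hC n x) ^ 2)⁻¹ * Jac (hC n) N i i x
      = π ^ 2 * cos (π * c) / cosFactor c := fun i hi => by
    rw [inv_sq_mul_Jac_hC hN (fun j hj => (hx j hj).symm ▸ hc) (ne_of_mem_erase hi),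
      hx i (ne_of_mem_erase hi)]
  rw [Finset.sum_congr rfl hterm, sum_const, card_erase_of_mem (mem_univ N), card_univ,
    Fintype.card_fin, nsmul_eq_mul, Nat.cast_sub (by omega), Nat.cast_one]

end LastCoordinate

theorem stmt_10 (n : ℕ) (hn : 2 ≤ n) (s : ℝ) :
    let N : Fin n := ⟨n - 1, by omega⟩
    let a : Fin n → ℝ := fun j => if j = N then s else 0
    let b : Fin n → ℝ := fun j => if j = N then s else 1
    (∑ i ∈ Finset.univ.erase N, ((hC n a) ^ 2)⁻¹ * Jac (hC n) N i i a
        = ((n : ℝ) - 1) / 3 * π ^ 2) ∧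
    (0 < ((n : ℝ) - 1) / 3 * π ^ 2) ∧
    (∑ i ∈ Finset.univ.erase N, ((hC n b) ^ 2)⁻¹ * Jac (hC n) N i i b
        = (1 - (n : ℝ)) * π ^ 2) ∧
    ((1 - (n : ℝ)) * π ^ 2 < 0) := by
  intro N a b
  have hN : (N : ℕ) = n - 1 := rfl
  rw [sum_inv_sq_mul_Jac_hC_of_const hN (c := 0) (fun j hj => if_neg hj) (by simp),
    sum_inv_sq_mul_Jac_hC_of_const hN (c := 1) (fun j hj => if_neg hj) (by simp)]
  have hn' : (2 : ℝ) ≤ n := by exact_mod_cast hn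
  have hπ : 0 < π ^ 2 := pow_pos pi_pos 2
  simp only [cosFactor, mul_zero, mul_one, cos_zero, cos_pi]
  refine ⟨by ring, mul_pos (by linarith) hπ, by ring, by nlinarith⟩
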